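/- arXiv:1904.11785 — 5 statements merged into one kernel-verified Lean document; each statement's English description precedes it below -/
import Mathlib

section
/- Let q0, n, k, ℓ, t, h, η, α be valid parameters of the TRS cryptosystem, and assume additionally that ℓ ≤ (√n − 3)/2. Let C_sub = TRS_{k,n}[α,t,h,η] ∩ F_{q0}^n be the F_{q0}-subfield subcode of the twisted Reed–Solomon code (an F_{q0}-linear code of length n). Then (C_sub)^{(⋆2)} = RS_{2k−1,n}[α], the F_{q0}-linear Reed–Solomon code of dimension 2k−1 with locators α. -/
open Polynomial

/-- Evaluation vector: `ev_α(f) = (f(α₁),…,f(α_n))`. -/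
noncomputable def evalVec {F : Type*} [Field F] {n : ℕ} (α : Fin n → F) (f : F[X]) :
    Fin n → F :=
  fun i => f.eval (α i)

/-- The twisted polynomial with coefficient vector `u`:
`Σ_{i=0}^{k−1} u_i X^i + Σ_{j=1}^{ℓ} η_j u_{h_j} X^{k−1+t_j}`. -/
noncomputable def twistedPoly {F : Type*} [Field F] (k ℓ : ℕ) (t : Fin ℓ → ℕ)
    (h : Fin ℓ → Fin k) (η : Fin ℓ → F) (u : Fin k → F) : F[X] :=
  (∑ i : Fin k, Polynomial.C (u i) * Polynomial.X ^ (i : ℕ))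
    + ∑ j : Fin ℓ, Polynomial.C (η j * u (h j)) * Polynomial.X ^ (k - 1 + t j)

/-- The space of twisted polynomials `P_{k,n}[t,h,η]`. -/
def twistedPolySet (F : Type*) [Field F] (k ℓ : ℕ) (t : Fin ℓ → ℕ)
    (h : Fin ℓ → Fin k) (η : Fin ℓ → F) : Set F[X] :=
  { p | ∃ u : Fin k → F, p = twistedPoly k ℓ t h η u }

/-- The twisted Reed–Solomon code `TRS_{k,n}[α,t,h,η]`, as a subset of `F^n`. -/
def TRS {F : Type*} [Field F] {n : ℕ} (α : Fin n → F) (k ℓ : ℕ) (t : Fin ℓ → ℕ)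
    (h : Fin ℓ → Fin k) (η : Fin ℓ → F) : Set (Fin n → F) :=
  { c | ∃ u : Fin k → F, c = evalVec α (twistedPoly k ℓ t h η u) }

/-- The Reed–Solomon code `RS_{k,n}[α]`, as a subset of `F^n`. -/
def RS {F : Type*} [Field F] {n : ℕ} (α : Fin n → F) (k : ℕ) : Set (Fin n → F) :=
  { c | ∃ f : F[X], f.degree ≤ ((k - 1 : ℕ) : WithBot ℕ) ∧ c = evalVec α f }

/-!
A word of the subfield subcode is the evaluation, at the `K 0`-rational points `α`, of a twisted
polynomial of degree `< n` with values in `K 0`; by Lagrange interpolation all of its coefficients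
lie in `K 0`. The coefficient `η_j u_{h_j}` of `X ^ (k - 1 + t_j)` then forces `u_{h_j} = 0`
because `η_j ∉ K 0`, so the subcode consists of evaluations of polynomials over `K 0` of degree
`< k` whose hook coefficients vanish, and their Schur products lie in `RS_{2k-1}`. Conversely the
hooks form the block `[r, r + ℓ)`, and as `ℓ < r` and `r + 2ℓ < k`, every `m ≤ 2k - 2` is a sum
`i + j` of two exponents below `k` outside that block, so `ev(X ^ m) = ev(X ^ i) ⋆ ev(X ^ j)`.
The parameter constraints enter only through these inequalities and through the twists being
positive, pairwise distinct and small enough that `k - 1 + t_j < n`.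
-/

section Evaluation

variable {F : Type*} [Field F] {n : ℕ}

theorem evalVec_mul (α : Fin n → F) (p q : F[X]) :
    evalVec α (p * q) = evalVec α p * evalVec α q := by
  funext i
  simp [evalVec]

theorem evalVec_mem_span_X_pow (α : Fin n → F) (L : Subfield F) {p : F[X]}
    (hp : ∀ m, p.coeff m ∈ L) {N : ℕ} (hN : p.natDegree < N) :
    evalVec α p ∈ Submodule.span L { w | ∃ i < N, w = evalVec α (X ^ i) } := by
  have hsum :
      evalVec α p = ∑ m ∈ Finset.range N, (⟨p.coeff m, hp m⟩ : L) • evalVec α (X ^ m) := by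
    funext i
    simp [evalVec, eval_eq_sum_range' hN, Finset.sum_apply, Subfield.smul_def]
  rw [hsum]
  exact Submodule.sum_mem _ fun m hm => Submodule.smul_mem _ _ <|
    Submodule.subset_span ⟨m, Finset.mem_range.mp hm, rfl⟩

theorem coeff_mem_of_eval_mem (L : Subfield F) {α : Fin n → F} (hα : Function.Injective α)
    (hαL : ∀ i, α i ∈ L) {p : F[X]} (hp : p.degree < n) (hpL : ∀ i, p.eval (α i) ∈ L) (m : ℕ) :
    p.coeff m ∈ L := by
  classical
  let β : Fin n → L := fun i => ⟨α i, hαL i⟩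
  have hβ : Set.InjOn β (Finset.univ : Finset (Fin n)) := fun i _ j _ hij =>
    hα (congrArg Subtype.val hij)
  let q := Lagrange.interpolate Finset.univ β fun i => ⟨p.eval (α i), hpL i⟩
  have hpq : p = q.map L.subtype := by
    refine eq_of_degrees_lt_of_eval_index_eq (v := α) Finset.univ hα.injOn
      (by simpa using hp) ?_ fun i _ => ?_
    · rw [degree_map_eq_of_injective L.subtype_injective]
      exact (Lagrange.degree_interpolate_lt _ hβ).trans_eq (by simp)
    · rw [eval_map, show α i = L.subtype (β i) from rfl, eval₂_hom,
        Lagrange.eval_interpolate_at_node _ hβ (Finset.mem_univ i)]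
      rfl
  rw [hpq, coeff_map]
  exact (q.coeff m).2

theorem coeff_mul_mem (L : Subfield F) {p q : F[X]} (hp : ∀ m, p.coeff m ∈ L)
    (hq : ∀ m, q.coeff m ∈ L) (m : ℕ) : (p * q).coeff m ∈ L := by
  rw [coeff_mul]
  exact L.sum_mem fun x _ => L.mul_mem (hp _) (hq _)

end Evaluation

section Parameters

variable {n k ℓ r : ℕ}

theorem le_and_lt_of_eq_ceil_add_two (hr : r = ⌈((n : ℝ) + 1) / ((ℓ : ℝ) + 2)⌉₊ + 2) :
    ((n : ℝ) + 1) / ((ℓ : ℝ) + 2) + 2 ≤ r ∧ (r : ℝ) < ((n : ℝ) + 1) / ((ℓ : ℝ) + 2) + 3 := by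
  have hx : 0 ≤ ((n : ℝ) + 1) / ((ℓ : ℝ) + 2) := by positivity
  subst hr
  push_cast
  constructor <;> linarith [Nat.le_ceil (((n : ℝ) + 1) / ((ℓ : ℝ) + 2)), Nat.ceil_lt_add_one hx]

theorem sqrt_lt_div (hℓ : (ℓ : ℝ) ≤ (Real.sqrt n - 3) / 2) :
    Real.sqrt n < ((n : ℝ) + 1) / ((ℓ : ℝ) + 2) := by
  have hs : Real.sqrt n ^ 2 = n := Real.sq_sqrt n.cast_nonneg
  rw [lt_div_iff₀ (by positivity)]
  nlinarith [Real.sqrt_nonneg n, (ℓ.cast_nonneg : (0 : ℝ) ≤ ℓ)]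

theorem two_mul_add_six_le (hr : r = ⌈((n : ℝ) + 1) / ((ℓ : ℝ) + 2)⌉₊ + 2)
    (hℓ : (ℓ : ℝ) ≤ (Real.sqrt n - 3) / 2) : 2 * ℓ + 6 ≤ r := by
  have := (le_and_lt_of_eq_ceil_add_two hr).1
  have := sqrt_lt_div hℓ
  have : ((2 * ℓ + 5 : ℕ) : ℝ) < r := by push_cast; linarith
  exact_mod_cast this

theorem add_two_mul_add_one_le (hr : r = ⌈((n : ℝ) + 1) / ((ℓ : ℝ) + 2)⌉₊ + 2)
    (hk : Real.sqrt n < k) (hℓk : ((n : ℝ) + 1) / ((k : ℝ) - Real.sqrt n) < (ℓ : ℝ) + 2)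
    (hℓ : (ℓ : ℝ) ≤ (Real.sqrt n - 3) / 2) : r + 2 * ℓ + 1 ≤ k := by
  have := (le_and_lt_of_eq_ceil_add_two hr).2
  have hx : ((n : ℝ) + 1) / ((ℓ : ℝ) + 2) < k - Real.sqrt n := by
    rw [div_lt_iff₀ (by linarith)] at hℓk
    rw [div_lt_iff₀ (by positivity)]
    linarith
  have : ((r + 2 * ℓ : ℕ) : ℝ) < k := by push_cast; linarith
  exact_mod_cast this

theorem add_three_le_two_mul (hr : r = ⌈((n : ℝ) + 1) / ((ℓ : ℝ) + 2)⌉₊ + 2) (hk : 0 < k)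
    (hℓk : (ℓ : ℝ) + 2 < 2 * n / k) : k + 3 ≤ 2 * r := by
  have := (le_and_lt_of_eq_ceil_add_two hr).1
  have hx : (k : ℝ) < 2 * (((n : ℝ) + 1) / ((ℓ : ℝ) + 2)) := by
    rw [lt_div_iff₀ (by positivity)] at hℓk
    rw [mul_div_assoc', lt_div_iff₀ (by positivity)]
    linarith
  have : ((k + 2 : ℕ) : ℝ) < 2 * r := by push_cast; linarith
  exact_mod_cast this

theorem mul_sub_two_add_two_le (hr : r = ⌈((n : ℝ) + 1) / ((ℓ : ℝ) + 2)⌉₊ + 2)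
    (hℓ : (ℓ : ℝ) ≤ (Real.sqrt n - 3) / 2) : ((ℓ : ℤ) + 1) * ((r : ℤ) - 2) + 2 ≤ n := by
  obtain ⟨hlo, hhi⟩ := le_and_lt_of_eq_ceil_add_two hr
  have hs := sqrt_lt_div hℓ
  set x := ((n : ℝ) + 1) / ((ℓ : ℝ) + 2)
  have hx : ((ℓ : ℝ) + 2) * x = n + 1 := by simp only [x]; field_simp
  have : ((ℓ : ℝ) + 1) * ((r : ℝ) - 2) < ((ℓ : ℝ) + 1) * (x + 1) :=
    mul_lt_mul_of_pos_left (by linarith) (by positivity)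
  have : (((ℓ : ℤ) + 1) * ((r : ℤ) - 2) : ℝ) < n - 1 := by push_cast; nlinarith
  have : ((ℓ : ℤ) + 1) * ((r : ℤ) - 2) < n - 1 := by exact_mod_cast this
  omega

end Parameters

section Twists

variable {n k ℓ r : ℕ} {t : Fin ℓ → ℕ}

theorem one_le_twist
    (ht : ∀ j : Fin ℓ, (t j : ℤ) = ((j : ℕ) + 2) * ((r : ℤ) - 2) - (k : ℤ) + 2)
    (hkr : k + 3 ≤ 2 * r) (j : Fin ℓ) : 1 ≤ t j := by
  have := ht j
  have : (2 : ℤ) * ((r : ℤ) - 2) ≤ ((j : ℕ) + 2) * ((r : ℤ) - 2) :=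
    mul_le_mul_of_nonneg_right (by omega) (by omega)
  omega

theorem add_twist_lt
    (ht : ∀ j : Fin ℓ, (t j : ℤ) = ((j : ℕ) + 2) * ((r : ℤ) - 2) - (k : ℤ) + 2)
    (hk : 1 ≤ k) (hr : 2 ≤ r) (hn : ((ℓ : ℤ) + 1) * ((r : ℤ) - 2) + 2 ≤ n) (j : Fin ℓ) :
    k - 1 + t j < n := by
  have := ht j
  have : ((j : ℕ) + 2 : ℤ) * ((r : ℤ) - 2) ≤ ((ℓ : ℤ) + 1) * ((r : ℤ) - 2) :=
    mul_le_mul_of_nonneg_right (by omega) (by omega)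
  omega

theorem twist_injective
    (ht : ∀ j : Fin ℓ, (t j : ℤ) = ((j : ℕ) + 2) * ((r : ℤ) - 2) - (k : ℤ) + 2) (hr : r ≠ 2) :
    Function.Injective t := by
  intro i j hij
  have := ht i
  rw [hij, ht j] at this
  have : ((j : ℕ) + 2 : ℤ) = (i : ℕ) + 2 :=
    mul_right_cancel₀ (by omega : (r : ℤ) - 2 ≠ 0) (by linarith)
  omega

end Twists

section TwistedPoly

variable {F : Type*} [Field F] {k ℓ : ℕ} {t : Fin ℓ → ℕ} {h : Fin ℓ → Fin k} {η : Fin ℓ → F}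

theorem coeff_twistedPoly (u : Fin k → F) (m : ℕ) :
    (twistedPoly k ℓ t h η u).coeff m =
      (∑ i : Fin k, if m = i then u i else 0)
        + ∑ j : Fin ℓ, if m = k - 1 + t j then η j * u (h j) else 0 := by
  simp only [twistedPoly, coeff_add, finsetSum_coeff, coeff_C_mul, coeff_X_pow, mul_ite,
    mul_one, mul_zero]

theorem coeff_twistedPoly_of_lt (ht : ∀ j, 1 ≤ t j) (u : Fin k → F) {m : ℕ} (hm : m < k) :
    (twistedPoly k ℓ t h η u).coeff m = u ⟨m, hm⟩ := by
  rw [coeff_twistedPoly, Finset.sum_eq_single_of_mem ⟨m, hm⟩ (Finset.mem_univ _)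
      fun i _ hi => if_neg fun him => hi (Fin.ext him.symm), if_pos rfl,
    Finset.sum_eq_zero fun j _ => if_neg (by have := ht j; omega), add_zero]

theorem coeff_twistedPoly_twist (ht : ∀ j, 1 ≤ t j) (ht_inj : Function.Injective t)
    (u : Fin k → F) (j : Fin ℓ) :
    (twistedPoly k ℓ t h η u).coeff (k - 1 + t j) = η j * u (h j) := by
  have := ht j
  rw [coeff_twistedPoly, Finset.sum_eq_zero fun i _ => if_neg (by omega), zero_add,
    Finset.sum_eq_single_of_mem j (Finset.mem_univ _)
      fun i _ hi => if_neg fun hij => hi (ht_inj (by have := ht i; omega)).symm, if_pos rfl]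

theorem natDegree_twistedPoly_le (u : Fin k → F) (hu : ∀ j, u (h j) = 0) :
    (twistedPoly k ℓ t h η u).natDegree ≤ k - 1 := by
  rw [natDegree_le_iff_coeff_eq_zero]
  intro m hm
  rw [coeff_twistedPoly, Finset.sum_eq_zero fun i _ => if_neg (by omega),
    Finset.sum_eq_zero fun j _ => by rw [hu, mul_zero, ite_self], add_zero]

theorem degree_twistedPoly_lt {n : ℕ} (hkn : k ≤ n) (htn : ∀ j, k - 1 + t j < n)
    (u : Fin k → F) :
    (twistedPoly k ℓ t h η u).degree < n := by
  rw [degree_lt_iff_coeff_zero]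
  intro m hm
  rw [coeff_twistedPoly, Finset.sum_eq_zero fun i _ => if_neg (by omega),
    Finset.sum_eq_zero fun j _ => if_neg (by have := htn j; omega), add_zero]

theorem twistedPoly_single (a : Fin k) (ha : ∀ j, h j ≠ a) :
    twistedPoly k ℓ t h η (Pi.single a 1) = X ^ (a : ℕ) := by
  classical
  simp [twistedPoly, Pi.single_apply, ha]

theorem hook_eq_zero_of_coeff_mem (L : Subfield F) (ht : ∀ j, 1 ≤ t j)
    (ht_inj : Function.Injective t) (hη : ∀ j, η j ∉ L) {u : Fin k → F}
    (hu : ∀ m, (twistedPoly k ℓ t h η u).coeff m ∈ L) (j : Fin ℓ) : u (h j) = 0 := by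
  by_contra hne
  have hhook : u (h j) ∈ L := by
    simpa [coeff_twistedPoly_of_lt ht] using hu (h j)
  have htwist : η j * u (h j) ∈ L := by
    simpa [coeff_twistedPoly_twist ht ht_inj] using hu (k - 1 + t j)
  apply hη j
  simpa [hne] using L.mul_mem htwist (L.inv_mem hhook)

theorem exists_poly_of_mem_subfieldSubcode {n : ℕ} {α : Fin n → F} (L : Subfield F)
    (hα : Function.Injective α) (hαL : ∀ i, α i ∈ L) (hkn : k ≤ n) (htn : ∀ j, k - 1 + t j < n)
    (ht : ∀ j, 1 ≤ t j) (ht_inj : Function.Injective t) (hη : ∀ j, η j ∉ L) {c : Fin n → F}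
    (hc : c ∈ TRS α k ℓ t h η ∩ { w | ∀ i, w i ∈ L }) :
    ∃ p : F[X], (∀ m, p.coeff m ∈ L) ∧ p.natDegree ≤ k - 1 ∧ c = evalVec α p := by
  obtain ⟨⟨u, rfl⟩, hcL⟩ := hc
  have hu := coeff_mem_of_eval_mem L hα hαL (degree_twistedPoly_lt hkn htn u) hcL
  exact ⟨_, hu, natDegree_twistedPoly_le u (hook_eq_zero_of_coeff_mem L ht ht_inj hη hu), rfl⟩

theorem evalVec_X_pow_mem_subfieldSubcode {n : ℕ} {α : Fin n → F} (L : Subfield F)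
    (hαL : ∀ i, α i ∈ L) (a : Fin k) (ha : ∀ j, h j ≠ a) :
    evalVec α (X ^ (a : ℕ)) ∈ TRS α k ℓ t h η ∩ { w | ∀ i, w i ∈ L } :=
  ⟨⟨Pi.single a 1, by rw [twistedPoly_single a ha]⟩,
    fun i => by simpa [evalVec] using pow_mem (hαL i) a⟩

end TwistedPoly

theorem exists_add_eq_outside_block {k ℓ r m : ℕ} (hℓr : ℓ < r) (hrk : r + 2 * ℓ + 1 ≤ k)
    (hm : m < 2 * k - 1) :
    ∃ i j, i + j = m ∧ i < k ∧ j < k ∧ (i < r ∨ r + ℓ ≤ i) ∧ (j < r ∨ r + ℓ ≤ j) := by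
  by_cases h₁ : m ≤ 2 * r - 2
  · exact ⟨m / 2, m - m / 2, by omega, by omega, by omega, by omega, by omega⟩
  by_cases h₂ : m ≤ 2 * r + ℓ - 1
  · exact ⟨r + ℓ, m - (r + ℓ), by omega, by omega, by omega, by omega, by omega⟩
  by_cases h₃ : m ≤ k + r - 2
  · exact ⟨m - (r - 1), r - 1, by omega, by omega, by omega, by omega, by omega⟩
  · exact ⟨m / 2, m - m / 2, by omega, by omega, by omega, by omega, by omega⟩

theorem schurSquare_subfieldSubcode_eq_RS_general
    {F : Type*} [Field F] {n k ℓ r : ℕ}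
    (K : Fin (ℓ + 1) → Subfield F)
    (hchain : ∀ i : Fin ℓ, K i.castSucc < K i.succ)
    (hkn : k < n)
    (hk1 : 2 * Real.sqrt n + 6 < (k : ℝ))
    (hℓ1 : ((n : ℝ) + 1) / ((k : ℝ) - Real.sqrt n) < (ℓ : ℝ) + 2)
    (hℓ2 : (ℓ : ℝ) + 2
            < min (min ((k : ℝ) + 3) (2 * (n : ℝ) / (k : ℝ))) (Real.sqrt n - 2))
    (hr : r = ⌈((n : ℝ) + 1) / ((ℓ : ℝ) + 2)⌉₊ + 2)
    (t : Fin ℓ → ℕ) (h : Fin ℓ → Fin k)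
    (ht : ∀ j : Fin ℓ, (t j : ℤ) = ((j : ℕ) + 2) * ((r : ℤ) - 2) - (k : ℤ) + 2)
    (hh : ∀ j : Fin ℓ, (h j : ℕ) = r + (j : ℕ))
    (η : Fin ℓ → F)
    (hη : ∀ j : Fin ℓ, η j ∈ K j.succ ∧ η j ∉ K j.castSucc)
    (α : Fin n → F) (hαK : ∀ i, α i ∈ K 0) (hα : Function.Injective α)
    (hℓsmall : (ℓ : ℝ) ≤ (Real.sqrt n - 3) / 2) :
    Submodule.span (K 0)
      { v : Fin n → F |
        ∃ a ∈ TRS α k ℓ t h η ∩ { w | ∀ i, w i ∈ K 0 },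
        ∃ b ∈ TRS α k ℓ t h η ∩ { w | ∀ i, w i ∈ K 0 },
          v = a * b }
    = Submodule.span (K 0)
        { w : Fin n → F | ∃ i < 2 * k - 1, w = evalVec α (Polynomial.X ^ i) } := by
  have hk : Real.sqrt n < k := by linarith [Real.sqrt_nonneg n]
  have hr₀ := two_mul_add_six_le hr hℓsmall
  have hrk := add_two_mul_add_one_le hr hk hℓ1 hℓsmall
  have hkr := add_three_le_two_mul hr (by omega)
    (hℓ2.trans_le ((min_le_left _ _).trans (min_le_right _ _)))
  have ht₁ := one_le_twist ht hkr
  have htn := add_twist_lt ht (by omega) (by omega) (mul_sub_two_add_two_le hr hℓsmall)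
  have ht_inj := twist_injective ht (by omega)
  have hη₀ : ∀ j, η j ∉ K 0 := fun j hj =>
    (hη j).2 (Fin.monotone_iff_le_succ.2 (fun i => (hchain i).le) (Fin.zero_le _) hj)
  apply le_antisymm <;> rw [Submodule.span_le]
  · rintro _ ⟨a, ha, b, hb, rfl⟩
    obtain ⟨p, hpL, hp, rfl⟩ :=
      exists_poly_of_mem_subfieldSubcode (K 0) hα hαK hkn.le htn ht₁ ht_inj hη₀ ha
    obtain ⟨q, hqL, hq, rfl⟩ :=
      exists_poly_of_mem_subfieldSubcode (K 0) hα hαK hkn.le htn ht₁ ht_inj hη₀ hb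
    rw [← evalVec_mul]
    exact evalVec_mem_span_X_pow α (K 0) (coeff_mul_mem (K 0) hpL hqL)
      (natDegree_mul_le.trans_lt (by omega))
  · rintro _ ⟨m, hm, rfl⟩
    obtain ⟨i, j, rfl, hi, hj, hi_out, hj_out⟩ := exists_add_eq_outside_block (by omega) hrk hm
    have h_ne : ∀ a : Fin k, ((a : ℕ) < r ∨ r + ℓ ≤ a) → ∀ j, h j ≠ a := by
      rintro a ha j rfl
      have := hh j
      omega
    refine Submodule.subset_span
      ⟨_, evalVec_X_pow_mem_subfieldSubcode (K 0) hαK ⟨i, hi⟩ (h_ne _ hi_out),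
        _, evalVec_X_pow_mem_subfieldSubcode (K 0) hαK ⟨j, hj⟩ (h_ne _ hj_out), ?_⟩
    rw [← evalVec_mul, pow_add]

/-- square of the subfield subcode: for valid parameters of the TRS
cryptosystem with ℓ ≤ (√n − 3)/2, the Schur square (over F_{q0} = K 0) of the
subfield subcode C_sub = TRS_{k,n}[α,t,h,η] ∩ F_{q0}^n is the Reed–Solomon code
RS_{2k−1,n}[α] = span_{F_{q0}}{ ev_α(X^i) : 0 ≤ i ≤ 2k−2 }. -/
theorem schurSquare_subfieldSubcode_eq_RS
    {F : Type*} [Field F] [Fintype F] {q0 n k ℓ r : ℕ}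
    (hq0pp : ∃ p m : ℕ, p.Prime ∧ 0 < m ∧ q0 = p ^ m)
    (K : Fin (ℓ + 1) → Subfield F)
    (hcard : ∀ i : Fin (ℓ + 1), Nat.card (K i) = q0 ^ 2 ^ (i : ℕ))
    (hchain : ∀ i : Fin ℓ, K i.castSucc < K i.succ)
    (htop : K (Fin.last ℓ) = ⊤)
    (hkn : k < n) (hnq0 : n ≤ q0 - 1)
    (hk1 : 2 * Real.sqrt n + 6 < (k : ℝ))
    (hk2 : (k : ℝ) ≤ (n : ℝ) / 2 - 2)
    (hℓ1 : ((n : ℝ) + 1) / ((k : ℝ) - Real.sqrt n) < (ℓ : ℝ) + 2)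
    (hℓ2 : (ℓ : ℝ) + 2
            < min (min ((k : ℝ) + 3) (2 * (n : ℝ) / (k : ℝ))) (Real.sqrt n - 2))
    (hr : r = ⌈((n : ℝ) + 1) / ((ℓ : ℝ) + 2)⌉₊ + 2)
    (t : Fin ℓ → ℕ) (h : Fin ℓ → Fin k)
    (ht : ∀ j : Fin ℓ, (t j : ℤ) = ((j : ℕ) + 2) * ((r : ℤ) - 2) - (k : ℤ) + 2)
    (hh : ∀ j : Fin ℓ, (h j : ℕ) = r + (j : ℕ))
    (η : Fin ℓ → F)
    (hη : ∀ j : Fin ℓ, η j ∈ K j.succ ∧ η j ∉ K j.castSucc)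
    (α : Fin n → F) (hαK : ∀ i, α i ∈ K 0) (hα : Function.Injective α)
    (hℓsmall : (ℓ : ℝ) ≤ (Real.sqrt n - 3) / 2) :
    Submodule.span (K 0)
      { v : Fin n → F |
        ∃ a ∈ TRS α k ℓ t h η ∩ { w | ∀ i, w i ∈ K 0 },
        ∃ b ∈ TRS α k ℓ t h η ∩ { w | ∀ i, w i ∈ K 0 },
          v = a * b }
    = Submodule.span (K 0)
        { w : Fin n → F | ∃ i < 2 * k - 1, w = evalVec α (Polynomial.X ^ i) } :=
  schurSquare_subfieldSubcode_eq_RS_general K hchain hkn hk1 hℓ1 hℓ2 hr t h ht hh η hη α hαK hα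
    hℓsmall
end

section
/- Let F be a finite field and let K_0 ⊊ K_1 ⊊ … ⊊ K_ℓ = F be a strictly increasing chain of subfields of F. Let k < n ≤ |K_0|, let α ∈ K_0^n have pairwise distinct entries, let t, h be as in the definition of twisted polynomials, and assume η_i ∈ K_i ∖ K_{i−1} for i = 1,…,ℓ. Then the twisted Reed–Solomon code TRS_{k,n}[α,t,h,η] is MDS: it has F-dimension k and every nonzero codeword has Hamming weight at least n − k + 1. -/
open Polynomial

open Finset


lemma TRS_chain_indep {F : Type*} [Field F] (ℓ : ℕ) (K : ℕ → Subfield F) (hK : Monotone K)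
    (η : ℕ → F) (hη1 : ∀ j < ℓ, η j ∈ K (j+1)) (hη2 : ∀ j < ℓ, η j ∉ K j)
    (c : Finset ℕ → F) (hc : ∀ S, c S ∈ K 0)
    (hsum : ∑ S ∈ (Finset.range ℓ).powerset, c S * ∏ j ∈ S, η j = 0) :
    ∀ S ∈ (Finset.range ℓ).powerset, c S = 0 := by
  induction ℓ generalizing c with
  | zero =>
    intro S hS
    simp only [Finset.range_zero, Finset.powerset_empty, Finset.mem_singleton] at hS
    subst hS
    simpa using hsum
  | succ m ih =>
    rw [Finset.range_add_one, Finset.sum_powerset_insert (by simp)] at hsum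
    have hQform : ∀ S ∈ (Finset.range m).powerset,
        c (insert m S) * ∏ j ∈ insert m S, η j = η m * (c (insert m S) * ∏ j ∈ S, η j) := by
      intro S hS
      rw [Finset.prod_insert (fun hm => by simp at hS; exact absurd (hS hm) (by simp))]
      ring
    rw [Finset.sum_congr rfl hQform, ← Finset.mul_sum] at hsum
    set P := ∑ S ∈ (Finset.range m).powerset, c S * ∏ j ∈ S, η j with hP
    set Q := ∑ S ∈ (Finset.range m).powerset, c (insert m S) * ∏ j ∈ S, η j with hQ
    have hmemP : ∀ (d : Finset ℕ → F), (∀ S, d S ∈ K 0) →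
        (∑ S ∈ (Finset.range m).powerset, d S * ∏ j ∈ S, η j) ∈ K m := by
      intro d hd
      refine Subfield.sum_mem _ (fun S hS => Subfield.mul_mem _ (hK (Nat.zero_le m) (hd S))
        (Subfield.prod_mem _ (fun j hj => ?_)))
      have hjm : j < m := by
        simp only [Finset.mem_powerset] at hS
        exact Finset.mem_range.mp (hS hj)
      exact hK hjm (hη1 j (Nat.lt_succ_of_lt hjm))
    have hPK : P ∈ K m := hmemP c hc
    have hQK : Q ∈ K m := hmemP (fun S => c (insert m S)) (fun S => hc _)
    have hQ0 : Q = 0 := by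
      by_contra hQ0
      have : η m = -P * Q⁻¹ := by
        field_simp
        linear_combination hsum
      exact hη2 m (Nat.lt_succ_self m)
        (this ▸ Subfield.mul_mem _ (Subfield.neg_mem _ hPK) (Subfield.inv_mem _ hQK))
    have hP0 : P = 0 := by rw [hQ0] at hsum; simpa using hsum
    have hc1 := ih (fun j hj => hη1 j (Nat.lt_succ_of_lt hj)) (fun j hj => hη2 j (Nat.lt_succ_of_lt hj)) c hc hP0
    have hc2 := ih (fun j hj => hη1 j (Nat.lt_succ_of_lt hj)) (fun j hj => hη2 j (Nat.lt_succ_of_lt hj)) (fun S => c (insert m S)) (fun S => hc _) hQ0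
    intro S hS
    simp only [Finset.mem_powerset, Finset.range_add_one] at hS
    by_cases hm : m ∈ S
    · have : S = insert m (S.erase m) := by simp [Finset.insert_erase hm]
      rw [this]
      refine hc2 _ ?_
      simp only [Finset.mem_powerset]
      intro x hx
      have := hS (Finset.mem_of_mem_erase hx)
      rcases Finset.mem_insert.mp this with h | h
      · exact absurd h (Finset.ne_of_mem_erase hx)
      · exact h
    · refine hc1 _ ?_
      simp only [Finset.mem_powerset]
      intro x hx
      rcases Finset.mem_insert.mp (hS hx) with h | h
      · exact absurd (h ▸ hx) hm
      · exact h

lemma TRS_det_ne_zero {F : Type*} [Field F] (ℓ : ℕ) (K : ℕ → Subfield F) (hK : Monotone K)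
    (η : Fin ℓ → F) (hη1 : ∀ j : Fin ℓ, η j ∈ K ((j : ℕ)+1)) (hη2 : ∀ j : Fin ℓ, η j ∉ K (j : ℕ))
    (a : Matrix (Fin ℓ) (Fin ℓ) F) (ha : ∀ i j, a i j ∈ K 0) :
    (1 - Matrix.of (fun i j => a i j * η j)).det ≠ 0 := by
  set M : Matrix (Fin ℓ) (Fin ℓ) F := 1 - Matrix.of (fun i j => a i j * η j) with hM
  set g : Finset (Fin ℓ) → F := fun S => ∑ σ : Equiv.Perm (Fin ℓ),
      ((Equiv.Perm.sign σ : ℤ) : F) *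
        ((∏ i ∈ S, (-(a (σ i) i))) * ∏ i ∈ univ \ S, (if σ i = i then (1:F) else 0)) with hg
  have hdet : M.det = ∑ S ∈ (univ : Finset (Fin ℓ)).powerset, g S * ∏ i ∈ S, η i := by
    rw [Matrix.det_apply']
    have hMe : ∀ (σ : Equiv.Perm (Fin ℓ)) (i : Fin ℓ),
        M (σ i) i = (-(a (σ i) i) * η i) + (if σ i = i then (1:F) else 0) := by
      intro σ i
      simp only [hM, Matrix.sub_apply, Matrix.one_apply, Matrix.of_apply]
      ring
    calc ∑ σ : Equiv.Perm (Fin ℓ), ((Equiv.Perm.sign σ : ℤ) : F) * ∏ i, M (σ i) i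
        = ∑ σ : Equiv.Perm (Fin ℓ), ∑ S ∈ (univ : Finset (Fin ℓ)).powerset,
            ((Equiv.Perm.sign σ : ℤ) : F) *
              ((∏ i ∈ S, (-(a (σ i) i))) * ∏ i ∈ univ \ S, (if σ i = i then (1:F) else 0))
              * ∏ i ∈ S, η i := by
          refine Finset.sum_congr rfl fun σ _ => ?_
          simp only [hMe σ]
          rw [Finset.prod_add, Finset.mul_sum]
          refine Finset.sum_congr rfl fun S _ => ?_
          rw [Finset.prod_mul_distrib]
          ring
      _ = ∑ S ∈ (univ : Finset (Fin ℓ)).powerset, g S * ∏ i ∈ S, η i := by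
          rw [Finset.sum_comm]
          refine Finset.sum_congr rfl fun S _ => ?_
          rw [hg, Finset.sum_mul]
  have hgK : ∀ S, g S ∈ K 0 := by
    intro S
    refine Subfield.sum_mem _ fun σ _ => Subfield.mul_mem _ (intCast_mem (K 0) _)
      (Subfield.mul_mem _ (Subfield.prod_mem _ fun i _ => Subfield.neg_mem _ (ha _ _))
        (Subfield.prod_mem _ fun i _ => ?_))
    split <;> [exact Subfield.one_mem _; exact Subfield.zero_mem _]
  have hg0 : g ∅ = 1 := by
    have : g ∅ = (1 : Matrix (Fin ℓ) (Fin ℓ) F).det := by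
      rw [Matrix.det_apply']
      refine Finset.sum_congr rfl fun σ _ => ?_
      simp [Matrix.one_apply]
    rw [this, Matrix.det_one]
  intro hdet0
  set η' : ℕ → F := fun m => if hm : m < ℓ then η ⟨m, hm⟩ else 0 with hη'
  set c : Finset ℕ → F := fun T => g (univ.filter fun i : Fin ℓ => (i : ℕ) ∈ T) with hcdef
  have hij : ∀ S : Finset (Fin ℓ),
      (univ.filter fun i : Fin ℓ => (i : ℕ) ∈ S.map Fin.valEmbedding) = S := by
    intro S
    ext i
    simp only [Finset.mem_filter, Finset.mem_univ, true_and]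
    exact Finset.mem_map' _
  have hji : ∀ T ∈ (Finset.range ℓ).powerset,
      ((univ.filter fun i : Fin ℓ => (i : ℕ) ∈ T).map Fin.valEmbedding) = T := by
    intro T hT
    rw [Finset.mem_powerset] at hT
    ext m
    simp only [Finset.mem_map, Finset.mem_filter, Finset.mem_univ, true_and,
      Fin.valEmbedding_apply]
    constructor
    · rintro ⟨i, hi, rfl⟩; exact hi
    · intro hm
      exact ⟨⟨m, Finset.mem_range.mp (hT hm)⟩, hm, rfl⟩
  have hkey : ∑ T ∈ (Finset.range ℓ).powerset, c T * ∏ j ∈ T, η' j = 0 := by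
    rw [← hdet0, hdet]
    refine Finset.sum_nbij' (i := fun T => univ.filter fun i : Fin ℓ => (i : ℕ) ∈ T)
      (j := fun S => S.map Fin.valEmbedding) (fun T _ => by simp) ?_ hji
      (fun S _ => hij S) ?_
    · intro S _
      rw [Finset.mem_powerset]
      intro m hm
      rcases Finset.mem_map.mp hm with ⟨i, _, rfl⟩
      exact Finset.mem_range.mpr i.isLt
    · intro T hT
      have h2 : ∏ j ∈ T, η' j = ∏ i ∈ univ.filter (fun i : Fin ℓ => (i : ℕ) ∈ T), η i := by
        conv_lhs => rw [← hji T hT]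
        rw [Finset.prod_map]
        refine Finset.prod_congr rfl fun i _ => ?_
        simp only [hη', Fin.valEmbedding_apply, i.isLt, dif_pos]
      rw [h2, hcdef]
  have hall := TRS_chain_indep ℓ K hK η'
    (fun j hj => by simpa only [hη', dif_pos hj] using hη1 ⟨j, hj⟩)
    (fun j hj => by simpa only [hη', dif_pos hj] using hη2 ⟨j, hj⟩)
    c (fun T => hgK _) hkey
  have := hall ∅ (by simp)
  rw [hcdef] at this
  simp only [Finset.notMem_empty, Finset.filter_false] at this
  rw [hg0] at this
  · exact one_ne_zero this

lemma twistedPoly_coeff {F : Type*} [Field F] (k ℓ : ℕ) (t : Fin ℓ → ℕ)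
    (h : Fin ℓ → Fin k) (η : Fin ℓ → F) (u : Fin k → F) (d : ℕ) :
    (twistedPoly k ℓ t h η u).coeff d =
      (if hd : d < k then u ⟨d, hd⟩ else 0)
        + ∑ j : Fin ℓ, if k - 1 + t j = d then η j * u (h j) else 0 := by
  rw [twistedPoly, Polynomial.coeff_add, Polynomial.finset_sum_coeff,
    Polynomial.finset_sum_coeff]
  congr 1
  · simp only [Polynomial.coeff_C_mul, Polynomial.coeff_X_pow]
    by_cases hd : d < k
    · rw [dif_pos hd, Finset.sum_eq_single (⟨d, hd⟩ : Fin k)]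
      · simp
      · intro i _ hi
        have : d ≠ (i : ℕ) := by
          intro hdi
          exact hi (by ext; simp [hdi.symm])
        simp [this]
      · simp
    · rw [dif_neg hd]
      refine Finset.sum_eq_zero fun i _ => ?_
      have : d ≠ (i : ℕ) := fun hdi => hd (hdi ▸ i.isLt)
      simp [this]
  · refine Finset.sum_congr rfl fun j _ => ?_
    simp only [Polynomial.coeff_C_mul, Polynomial.coeff_X_pow]
    rcases eq_or_ne (k - 1 + t j) d with he | he
    · simp [he]
    · simp [he, Ne.symm he]


lemma roots_imp_zero {F : Type*} [Field F] {n k ℓ : ℕ}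
    (hk : 1 ≤ k)
    (t : Fin ℓ → ℕ) (htr1 : ∀ j, 1 ≤ t j)
    (h : Fin ℓ → Fin k)
    (K : ℕ → Subfield F) (hK : Monotone K)
    (η : Fin ℓ → F) (hη1 : ∀ j : Fin ℓ, η j ∈ K ((j : ℕ)+1)) (hη2 : ∀ j : Fin ℓ, η j ∉ K (j : ℕ))
    (α : Fin n → F) (hαK : ∀ i, α i ∈ K 0) (hα : Function.Injective α)
    (u : Fin k → F)
    (S : Finset (Fin n)) (hS : S.card = k)
    (hroot : ∀ i ∈ S, (twistedPoly k ℓ t h η u).eval (α i) = 0) :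
    u = 0 := by
  classical
  set f : F[X] := twistedPoly k ℓ t h η u with hf
  set E : Fin ℓ → F := fun j => η j * u (h j) with hE
  set P : F → Prop := fun x => ∃ c : Fin ℓ → F, (∀ j, c j ∈ K 0) ∧ x = ∑ j, c j * E j
    with hP
  -- closure properties
  have hM0 : P 0 := ⟨0, fun j => Subfield.zero_mem _, by simp⟩
  have hMadd : ∀ {x y}, P x → P y → P (x + y) := by
    rintro x y ⟨c, hc, rfl⟩ ⟨c', hc', rfl⟩
    exact ⟨c + c', fun j => Subfield.add_mem _ (hc j) (hc' j), by
      rw [← Finset.sum_add_distrib]; refine Finset.sum_congr rfl fun j _ => by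
        simp [add_mul]⟩
  have hMsmul : ∀ {b x}, b ∈ K 0 → P x → P (b * x) := by
    rintro b x hb ⟨c, hc, rfl⟩
    exact ⟨fun j => b * c j, fun j => Subfield.mul_mem _ hb (hc j), by
      rw [Finset.mul_sum]; refine Finset.sum_congr rfl fun j _ => by ring⟩
  have hMneg : ∀ {x}, P x → P (-x) := by
    intro x hx
    have : (-1 : F) * x = -x := by ring
    exact this ▸ hMsmul (Subfield.neg_mem _ (Subfield.one_mem _)) hx
  have hMsub : ∀ {x y}, P x → P y → P (x - y) := by
    intro x y hx hy
    rw [sub_eq_add_neg]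
    exact hMadd hx (hMneg hy)
  have hMcomb : ∀ {ι : Type} (s : Finset ι) (b v : ι → F), (∀ i ∈ s, b i ∈ K 0) →
      (∀ i ∈ s, P (v i)) → P (∑ i ∈ s, b i * v i) := by
    intro ι s b v hb hv
    induction s using Finset.induction with
    | empty => simpa using hM0
    | insert _ _ ha ih =>
      rw [Finset.sum_insert ha]
      exact hMadd (hMsmul (hb _ (Finset.mem_insert_self _ _)) (hv _ (Finset.mem_insert_self _ _)))
        (ih (fun i hi => hb i (Finset.mem_insert_of_mem hi))
          (fun i hi => hv i (Finset.mem_insert_of_mem hi)))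
  have hME : ∀ j, P (E j) := by
    intro j
    refine ⟨fun j' => if j' = j then 1 else 0, fun j' => ?_, ?_⟩
    · dsimp only
      split <;> [exact Subfield.one_mem _; exact Subfield.zero_mem _]
    · have : ∀ j' : Fin ℓ, (if j' = j then (1:F) else 0) * E j'
          = if j' = j then E j' else 0 := by
        intro j'; split <;> simp
      rw [Finset.sum_congr rfl fun j' _ => this j', Finset.sum_ite_eq']
      simp
  -- coefficients of f
  have hlow : ∀ i : Fin k, f.coeff i = u i := by
    intro i
    rw [hf, twistedPoly_coeff]
    rw [dif_pos i.isLt]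
    have : ∀ j : Fin ℓ, (if k - 1 + t j = (i : ℕ) then η j * u (h j) else 0) = 0 := by
      intro j
      have : k - 1 + t j ≠ (i : ℕ) := by
        have := htr1 j
        have := i.isLt
        omega
      simp [this]
    rw [Finset.sum_congr rfl fun j _ => this j]
    simp
  have hhigh : ∀ m : ℕ, P (f.coeff (k + m)) := by
    intro m
    rw [hf, twistedPoly_coeff, dif_neg (by omega)]
    rw [zero_add]
    have : ∀ j : Fin ℓ, (if k - 1 + t j = k + m then η j * u (h j) else 0)
        = (if k - 1 + t j = k + m then (1:F) else 0) * E j := by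
      intro j; split <;> simp [hE]
    rw [Finset.sum_congr rfl fun j _ => this j]
    refine hMcomb _ _ _ (fun j _ => ?_) (fun j _ => hME j)
    split <;> [exact Subfield.one_mem _; exact Subfield.zero_mem _]
  -- the polynomial B
  set B0 : (K 0)[X] := ∏ i ∈ S, (X - C (⟨α i, hαK i⟩ : K 0)) with hB0
  set B : F[X] := B0.map (K 0).subtype with hB
  have hB0monic : B0.Monic := monic_prod_of_monic _ _ fun i _ => monic_X_sub_C _
  have hBmonic : B.Monic := hB0monic.map _
  have hBdeg : B.natDegree = k := by
    have hinj : Function.Injective ⇑((K 0).subtype) := Subtype.val_injective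
    rw [hB, natDegree_map_eq_of_injective hinj, hB0]
    rw [natDegree_prod_of_monic _ _ fun i _ => monic_X_sub_C _]
    simp [hS]
  have hBcoeff : ∀ m, B.coeff m ∈ K 0 := by
    intro m
    rw [hB, Polynomial.coeff_map]
    exact ((B0.coeff m)).2
  have hBeq : B = ∏ i ∈ S, (X - C (α i)) := by
    rw [hB, hB0, Polynomial.map_prod]
    refine Finset.prod_congr rfl fun i _ => ?_
    simp
  have hBdvd : B ∣ f := by
    rw [hBeq]
    have : ∀ T : Finset (Fin n), T ⊆ S → (∏ i ∈ T, (X - C (α i))) ∣ f := by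
      intro T
      induction T using Finset.induction with
      | empty =>
        intro _
        rw [Finset.prod_empty]
        exact one_dvd f
      | @insert a T ha ih =>
        intro hsub
        rw [Finset.prod_insert ha]
        have hcop : IsCoprime (X - C (α a)) (∏ i ∈ T, (X - C (α i))) := by
          refine IsCoprime.prod_right fun i hi => ?_
          refine Polynomial.isCoprime_X_sub_C_of_isUnit_sub ?_
          have : α a ≠ α i := fun he => ha ((hα he) ▸ hi)
          exact (sub_ne_zero.mpr this).isUnit
        refine IsCoprime.mul_dvd hcop ?_ (ih (fun i hi => hsub (Finset.mem_insert_of_mem hi)))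
        exact Polynomial.dvd_iff_isRoot.mpr (hroot a (hsub (Finset.mem_insert_self _ _)))
    exact this S le_rfl
  obtain ⟨q, hq⟩ := hBdvd
  -- coefficients of q are in the span
  have hqco : ∀ N m : ℕ, q.natDegree < m + N → P (q.coeff m) := by
    intro N
    induction N with
    | zero =>
      intro m hm
      rw [Polynomial.coeff_eq_zero_of_natDegree_lt (by omega)]
      exact hM0
    | succ N ih =>
      intro m hm
      have key : f.coeff (k + m) = q.coeff m + ∑ i ∈ Finset.range k,
          B.coeff i * q.coeff (k + m - i) := by
        rw [hq, Polynomial.coeff_mul, Finset.Nat.sum_antidiagonal_eq_sum_range_succ_mk]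
        have h1 : ∑ i ∈ Finset.range (k + m + 1), B.coeff i * q.coeff (k + m - i)
            = ∑ i ∈ Finset.range (k + 1), B.coeff i * q.coeff (k + m - i) := by
          refine (Finset.sum_subset (by intro x hx; simp at hx ⊢; omega) ?_).symm
          intro x hx hx'
          simp only [Finset.mem_range] at hx hx'
          rw [Polynomial.coeff_eq_zero_of_natDegree_lt (by omega), zero_mul]
        rw [show k + m + 1 = (k + m).succ from rfl] at *
        rw [h1, Finset.sum_range_succ]
        have : B.coeff k = 1 := by
          have := hBmonic.coeff_natDegree
          rwa [hBdeg] at this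
        rw [this]
        simp [add_comm]
      have : q.coeff m = f.coeff (k + m) - ∑ i ∈ Finset.range k,
          B.coeff i * q.coeff (k + m - i) := by rw [key]; ring
      rw [this]
      refine hMsub (hhigh m) (hMcomb _ _ _ (fun i _ => hBcoeff i) (fun i hi => ?_))
      refine ih (k + m - i) ?_
      simp only [Finset.mem_range] at hi
      omega
  have hqP : ∀ m, P (q.coeff m) := fun m => hqco (q.natDegree + 1) m (by omega)
  -- low coefficients of f = u i are in the span
  have hlowP : ∀ i : Fin k, P (u i) := by
    intro i
    rw [← hlow i, hq, Polynomial.coeff_mul, Finset.Nat.sum_antidiagonal_eq_sum_range_succ_mk]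
    exact hMcomb _ _ _ (fun e _ => hBcoeff e) (fun e _ => hqP _)
  -- extract the linear system
  choose c hcK hcu using hlowP
  set a : Matrix (Fin ℓ) (Fin ℓ) F := Matrix.of fun i j => c (h i) j with hadef
  set x : Fin ℓ → F := fun j => u (h j) with hx
  have hdet := TRS_det_ne_zero ℓ K hK η hη1 hη2 a (fun i j => hcK (h i) j)
  have hmul : (1 - Matrix.of (fun i j => a i j * η j)).mulVec x = 0 := by
    funext i
    rw [Matrix.sub_mulVec, Matrix.one_mulVec]
    simp only [Pi.sub_apply, Pi.zero_apply, Matrix.mulVec, dotProduct, hadef,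
      Matrix.of_apply, hx]
    rw [sub_eq_zero, hcu (h i)]
    refine Finset.sum_congr rfl fun j _ => ?_
    simp only [hE]
    ring
  have hx0 : x = 0 := Matrix.eq_zero_of_mulVec_eq_zero hdet hmul
  have hE0 : ∀ j, E j = 0 := by
    intro j
    have hj : u (h j) = 0 := congrFun hx0 j
    simp only [hE, hj, mul_zero]
  funext i
  rw [hcu i]
  simp [hE0]

/-- explicit MDS TRS codes: for a strictly increasing chain of subfields
K_0 ⊊ … ⊊ K_ℓ = F of a finite field F, k < n ≤ |K_0|, α ∈ K_0^n with pairwise distinct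
entries, and η_i ∈ K_i ∖ K_{i−1}, the code TRS_{k,n}[α,t,h,η] is MDS: it has
F-dimension k and every nonzero codeword has Hamming weight at least n − k + 1. -/
theorem TRS_isMDS
    {F : Type*} [Field F] [Fintype F] {n k ℓ : ℕ}
    (hk : 1 ≤ k) (hℓ : 1 ≤ ℓ)
    (t : Fin ℓ → ℕ) (htinj : Function.Injective t)
    (htr : ∀ j, 1 ≤ t j ∧ t j ≤ n - k)
    (h : Fin ℓ → Fin k) (hhinj : Function.Injective h)
    (K : Fin (ℓ + 1) → Subfield F)
    (hchain : ∀ i : Fin ℓ, K i.castSucc < K i.succ)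
    (htop : K (Fin.last ℓ) = ⊤)
    (hkn : k < n) (hncard : n ≤ Nat.card (K 0))
    (α : Fin n → F) (hαK : ∀ i, α i ∈ K 0) (hα : Function.Injective α)
    (η : Fin ℓ → F) (hη : ∀ j : Fin ℓ, η j ∈ K j.succ ∧ η j ∉ K j.castSucc) :
    Module.finrank F (Submodule.span F (TRS α k ℓ t h η)) = k ∧
      ∀ c ∈ TRS α k ℓ t h η, c ≠ 0 → n - k + 1 ≤ Set.ncard { i | c i ≠ 0 } := by
  classical
  -- the chain as an ℕ-indexed monotone family
  set KN : ℕ → Subfield F := fun m => K ⟨min m ℓ, by omega⟩ with hKNdef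
  have hKN_eq : ∀ (m : ℕ) (hm : m ≤ ℓ), KN m = K ⟨m, by omega⟩ := by
    intro m hm
    simp only [hKNdef]
    congr 1
    simp [Nat.min_eq_left hm]
  have hmono : Monotone KN := by
    refine monotone_nat_of_le_succ fun m => ?_
    rcases lt_or_ge m ℓ with hm | hm
    · rw [hKN_eq m hm.le, hKN_eq (m+1) hm]
      exact le_of_lt (hchain ⟨m, hm⟩)
    · have h1 : min m ℓ = ℓ := Nat.min_eq_right hm
      have h2 : min (m+1) ℓ = ℓ := Nat.min_eq_right (by omega)
      simp only [hKNdef, h1, h2]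
      exact le_rfl
  have hη1' : ∀ j : Fin ℓ, η j ∈ KN ((j : ℕ)+1) := by
    intro j
    rw [hKN_eq _ (by omega)]
    exact (hη j).1
  have hη2' : ∀ j : Fin ℓ, η j ∉ KN (j : ℕ) := by
    intro j
    rw [hKN_eq _ (by omega)]
    exact (hη j).2
  have h0eq : (⟨0, by omega⟩ : Fin (ℓ+1)) = 0 := by
    ext; simp
  have hαK' : ∀ i, α i ∈ KN 0 := by
    intro i
    rw [hKN_eq 0 (by omega), h0eq]
    exact hαK i
  -- linearity of the twisted polynomial map
  have tw_add : ∀ u v : Fin k → F, twistedPoly k ℓ t h η (u + v)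
      = twistedPoly k ℓ t h η u + twistedPoly k ℓ t h η v := by
    intro u v
    simp only [twistedPoly, Pi.add_apply, mul_add, Polynomial.C_add, add_mul]
    rw [Finset.sum_add_distrib, Finset.sum_add_distrib]
    ring
  have tw_smul : ∀ (b : F) (u : Fin k → F), twistedPoly k ℓ t h η (b • u)
      = Polynomial.C b * twistedPoly k ℓ t h η u := by
    intro b u
    simp only [twistedPoly, Pi.smul_apply, smul_eq_mul]
    rw [mul_add, Finset.mul_sum, Finset.mul_sum]
    congr 1
    · refine Finset.sum_congr rfl fun i _ => ?_
      rw [Polynomial.C_mul]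
      ring
    · refine Finset.sum_congr rfl fun j _ => ?_
      rw [show η j * (b * u (h j)) = b * (η j * u (h j)) by ring, Polynomial.C_mul]
      ring
  have tw_zero : twistedPoly k ℓ t h η (0 : Fin k → F) = 0 := by
    simp [twistedPoly]
  -- the evaluation linear map
  set φ : (Fin k → F) →ₗ[F] (Fin n → F) :=
    { toFun := fun u => evalVec α (twistedPoly k ℓ t h η u),
      map_add' := fun u v => by
        funext i
        simp [evalVec, tw_add],
      map_smul' := fun b u => by
        funext i
        simp [evalVec, tw_smul] } with hφdef
  have hcardn : k ≤ (Finset.univ : Finset (Fin n)).card := by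
    simp only [Finset.card_univ, Fintype.card_fin]
    omega
  have hinj : Function.Injective φ := by
    refine (injective_iff_map_eq_zero φ).mpr fun u hu => ?_
    obtain ⟨S, hSsub, hScard⟩ := Finset.exists_subset_card_eq hcardn
    exact roots_imp_zero hk t (fun j => (htr j).1) h KN hmono η hη1' hη2' α hαK' hα u S hScard
      (fun i _ => congrFun hu i)
  have hrange : TRS α k ℓ t h η = ↑(LinearMap.range φ) := by
    ext c
    simp only [TRS, Set.mem_setOf_eq, SetLike.mem_coe, LinearMap.mem_range]
    constructor
    · rintro ⟨u, rfl⟩; exact ⟨u, rfl⟩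
    · rintro ⟨u, rfl⟩; exact ⟨u, rfl⟩
  constructor
  · rw [hrange, Submodule.span_eq, LinearMap.finrank_range_of_inj hinj, Module.finrank_pi]
    simp
  · rintro c ⟨u, rfl⟩ hc0
    by_contra hw
    push_neg at hw
    set cvec : Fin n → F := evalVec α (twistedPoly k ℓ t h η u) with hcvec
    have hset : {i | cvec i ≠ 0} = ↑(Finset.univ.filter fun i => cvec i ≠ 0) := by
      ext i; simp
    rw [hset, Set.ncard_coe_finset] at hw
    have hsplit := Finset.card_filter_add_card_filter_not
      (s := (Finset.univ : Finset (Fin n))) (p := fun i => cvec i = 0)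
    have hcard0 : k ≤ (Finset.univ.filter fun i => cvec i = 0).card := by
      have hne : (Finset.univ.filter fun i => ¬ cvec i = 0)
          = (Finset.univ.filter fun i => cvec i ≠ 0) := by
        refine Finset.filter_congr fun i _ => Iff.rfl
      rw [hne] at hsplit
      simp only [Finset.card_univ, Fintype.card_fin] at hsplit
      omega
    obtain ⟨S, hSsub, hScard⟩ := Finset.exists_subset_card_eq hcard0
    have hu0 : u = 0 := by
      refine roots_imp_zero hk t (fun j => (htr j).1) h KN hmono η hη1' hη2' α hαK' hα u S hScard
        (fun i hi => ?_)
      exact (Finset.mem_filter.mp (hSsub hi)).2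
    apply hc0
    rw [hcvec, hu0, tw_zero]
    funext i
    simp [evalVec]
end

section
/- Let F be a finite field, let n and k be integers with 2 ≤ k ≤ n − 2, and let α, α' ∈ F^n each have pairwise distinct entries. If RS_{k,n}[α] = RS_{k,n}[α'], then there exist a ∈ F∖{0} and b ∈ F such that α'_i = a·α_i + b for all i = 1,…,n. -/
/-!
For `#S = k - 1`, the codewords of `RS_k[α]` vanishing on `S` are the multiples of
`(∏_{s ∈ S} (α_i - α_s))_i`, and likewise for `α'`; so equality of the codes makes these two
vectors proportional. Comparing `S = T ∪ {a}` with `S = T ∪ {b}`, where `#T = k - 2` avoids four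
given indices (room since `n ≥ k + 2`), shows that `i ↦ α'_i` preserves all cross-ratios, i.e. is a
Möbius transformation of `α`. Finally `X ∈ RS_k[α]` gives `g` of degree `< k` with `g(α'_i) = α_i`;
clearing denominators in the Möbius relation yields a polynomial of degree `≤ k < n` vanishing at
every `α'_i`, and its top coefficient forces the Möbius transformation to be affine.
-/

open Polynomial

namespace Polynomial

theorem eq_C_leadingCoeff_mul_prod_X_sub_C_of_eval_eq_zero {F ι : Type*} [Field F]
    {s : Finset ι} {v : ι → F} (hv : Set.InjOn v s) {g : F[X]}
    (hroot : ∀ i ∈ s, g.eval (v i) = 0) (hdeg : g.natDegree ≤ s.card) :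
    g = C g.leadingCoeff * ∏ i ∈ s, (X - C (v i)) :=
  eq_leadingCoeff_mul_of_monic_of_dvd_of_natDegree_le
    (monic_prod_of_monic _ _ fun i _ => monic_X_sub_C (v i))
    (Finset.prod_dvd_of_coprime
      (fun i hi j hj hij =>
        isCoprime_X_sub_C_of_isUnit_sub (sub_ne_zero.2 fun h => hij (hv hi hj h)).isUnit)
      fun i hi => dvd_iff_isRoot.2 (hroot i hi))
    (by rwa [natDegree_finsetProd_X_sub_C_eq_card])

end Polynomial

theorem mul_sub_eq_of_cross_ratio_eq {F ι : Type*} [Field F] [Fintype ι] {x y : ι → F}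
    (hy : Function.Injective y) {g : F[X]} (hg : ∀ i, g.eval (y i) = x i)
    (hdeg : g.natDegree + 1 < Fintype.card ι) {j a b : ι} (hab : x a ≠ x b)
    (hcr : ∀ i, (x i - x a) * (x j - x b) * ((y i - y b) * (y j - y a)) =
      (x i - x b) * (x j - x a) * ((y i - y a) * (y j - y b))) :
    (x j - x a) * (y j - y b) = (x j - x b) * (y j - y a) := by
  set K₁ := (x j - x b) * (y j - y a)
  set K₂ := (x j - x a) * (y j - y b)
  set R : F[X] :=
    C K₁ * ((g - C (x a)) * (X - C (y b))) - C K₂ * ((g - C (x b)) * (X - C (y a)))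
  have hR : R = 0 := by
    refine eq_zero_of_natDegree_lt_card_of_eval_eq_zero R hy (fun i => ?_) ?_
    · simp only [R, eval_sub, eval_mul, eval_C, eval_X, hg]
      linear_combination hcr i
    · refine lt_of_le_of_lt ?_ hdeg
      simp only [R]
      compute_degree
  have hg_pos : 0 < g.natDegree := by
    refine Nat.pos_of_ne_zero fun h0 => hab ?_
    rw [← hg a, ← hg b, eq_C_of_natDegree_eq_zero h0, eval_C, eval_C]
  have hcoeff := congrArg (coeff · (g.natDegree + 1)) hR
  simp only [R, coeff_sub, coeff_C_mul, coeff_mul_X_sub_C, coeff_natDegree, coeff_C,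
    hg_pos.ne', Nat.add_one_ne_zero, ↓reduceIte, sub_zero, coeff_natDegree_succ_eq_zero,
    zero_mul] at hcoeff
  have hlc : g.leadingCoeff ≠ 0 := leadingCoeff_ne_zero.2 (ne_zero_of_natDegree_gt hg_pos)
  exact (mul_right_cancel₀ hlc (sub_eq_zero.1 hcoeff)).symm

theorem exists_affine_of_mul_sub_eq {F ι : Type*} [Field F] {x y : ι → F} {a b : ι}
    (hx : x a ≠ x b) (hy : y a ≠ y b)
    (h : ∀ j, (x j - x a) * (y j - y b) = (x j - x b) * (y j - y a)) :
    ∃ c : F, c ≠ 0 ∧ ∃ d : F, ∀ j, y j = c * x j + d := by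
  have hx' : x a - x b ≠ 0 := sub_ne_zero.2 hx
  refine ⟨(y a - y b) / (x a - x b), div_ne_zero (sub_ne_zero.2 hy) hx',
    (x a * y b - x b * y a) / (x a - x b), fun j => ?_⟩
  field_simp
  linear_combination -h j

section ReedSolomon

variable {F : Type*} [Field F] {n k : ℕ} {α α' : Fin n → F}

theorem exists_eval_eq_of_RS_eq (hRS : RS α k = RS α' k) {f : F[X]}
    (hf : f.degree ≤ ((k - 1 : ℕ) : WithBot ℕ)) :
    ∃ g : F[X], g.natDegree ≤ k - 1 ∧ ∀ i, g.eval (α' i) = f.eval (α i) := by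
  obtain ⟨g, hg, hgf⟩ : evalVec α f ∈ RS α' k := hRS ▸ ⟨f, hf, rfl⟩
  exact ⟨g, natDegree_le_iff_degree_le.2 hg, fun i => (congrFun hgf i).symm⟩

theorem prod_sub_mul_prod_sub_comm_of_RS_eq (hRS : RS α k = RS α' k)
    (hα' : Function.Injective α') {S : Finset (Fin n)} (hS : S.card = k - 1) (i j : Fin n) :
    (∏ s ∈ S, (α i - α s)) * ∏ s ∈ S, (α' j - α' s) =
      (∏ s ∈ S, (α j - α s)) * ∏ s ∈ S, (α' i - α' s) := by
  obtain ⟨g, hg_deg, hg⟩ := exists_eval_eq_of_RS_eq hRS (f := ∏ s ∈ S, (X - C (α s))) (by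
    rw [degree_eq_natDegree (monic_prod_of_monic _ _ fun s _ => monic_X_sub_C (α s)).ne_zero,
      natDegree_finsetProd_X_sub_C_eq_card, hS])
  have hg_prod := eq_C_leadingCoeff_mul_prod_X_sub_C_of_eval_eq_zero hα'.injOn
    (fun s hs => by simp [hg, eval_prod, Finset.prod_eq_zero hs]) (hS ▸ hg_deg)
  have hval (l : Fin n) : ∏ s ∈ S, (α l - α s) = g.leadingCoeff * ∏ s ∈ S, (α' l - α' s) := by
    have := hg l
    rw [hg_prod] at this
    simpa [eval_prod] using this.symm
  rw [hval i, hval j]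
  ring

theorem cross_ratio_eq_of_RS_eq (hk : 2 ≤ k) (hkn : k + 2 ≤ n) (hRS : RS α k = RS α' k)
    (hα : Function.Injective α) (hα' : Function.Injective α') (i j a b : Fin n) :
    (α i - α a) * (α j - α b) * ((α' i - α' b) * (α' j - α' a)) =
      (α i - α b) * (α j - α a) * ((α' i - α' a) * (α' j - α' b)) := by
  classical
  obtain ⟨T, hT, hT_card⟩ := Finset.exists_subset_card_eq
    (s := ({i, j, a, b} : Finset (Fin n))ᶜ) (n := k - 2) (by
      rw [Finset.card_compl, Fintype.card_fin]
      have := Finset.card_le_four (a := i) (b := j) (c := a) (d := b)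
      omega)
  have hT_disj (l : Fin n) (hl : l ∈ ({i, j, a, b} : Finset (Fin n))) : l ∉ T :=
    fun hlT => Finset.mem_compl.1 (hT hlT) hl
  have hcard (c : Fin n) (hc : c ∉ T) : (insert c T).card = k - 1 := by
    rw [Finset.card_insert_of_notMem hc, hT_card]
    omega
  have ha := hT_disj a (by simp)
  have hb := hT_disj b (by simp)
  have hA := prod_sub_mul_prod_sub_comm_of_RS_eq hRS hα' (hcard a ha) i j
  have hB := prod_sub_mul_prod_sub_comm_of_RS_eq hRS hα' (hcard b hb) i j
  simp only [Finset.prod_insert ha, Finset.prod_insert hb] at hA hB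
  have hP : ∏ s ∈ T, (α i - α s) ≠ 0 := Finset.prod_ne_zero_iff.2 fun s hs =>
    sub_ne_zero.2 fun h => hT_disj i (by simp) (hα h ▸ hs)
  have hQ : ∏ s ∈ T, (α' j - α' s) ≠ 0 := Finset.prod_ne_zero_iff.2 fun s hs =>
    sub_ne_zero.2 fun h => hT_disj j (by simp) (hα' h ▸ hs)
  apply mul_left_cancel₀ (mul_ne_zero hP hQ)
  linear_combination (α j - α b) * (α' i - α' b) * hA - (α j - α a) * (α' i - α' a) * hB

end ReedSolomon

theorem RS_eq_implies_affine_general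
    {F : Type*} [Field F] {n k : ℕ}
    (hk : 2 ≤ k) (hkn : k ≤ n - 2)
    (α α' : Fin n → F) (hα : Function.Injective α) (hα' : Function.Injective α')
    (hRS : RS α k = RS α' k) :
    ∃ a : F, a ≠ 0 ∧ ∃ b : F, ∀ i, α' i = a * α i + b := by
  have hn : k + 2 ≤ n := by omega
  have hab : (⟨0, by omega⟩ : Fin n) ≠ ⟨1, by omega⟩ := by simp
  obtain ⟨g, hg_deg, hg⟩ := exists_eval_eq_of_RS_eq hRS (f := X) (by
    rw [degree_X]; exact_mod_cast (by omega : 1 ≤ k - 1))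
  refine exists_affine_of_mul_sub_eq (hα.ne hab) (hα'.ne hab) fun j => ?_
  exact mul_sub_eq_of_cross_ratio_eq hα' (by simpa using hg)
    (by rw [Fintype.card_fin]; omega) (hα.ne hab)
    fun i => cross_ratio_eq_of_RS_eq hk hn hRS hα hα' i j _ _

/-- Sidelnikov–Shestakov: over a finite field, if 2 ≤ k ≤ n − 2 and
α, α' have pairwise distinct entries with RS_{k,n}[α] = RS_{k,n}[α'], then
α' = aα + b·1 for some a ≠ 0 and b. -/
theorem RS_eq_implies_affine
    {F : Type*} [Field F] [Fintype F] {n k : ℕ}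
    (hk : 2 ≤ k) (hkn : k ≤ n - 2)
    (α α' : Fin n → F) (hα : Function.Injective α) (hα' : Function.Injective α')
    (hRS : RS α k = RS α' k) :
    ∃ a : F, a ≠ 0 ∧ ∃ b : F, ∀ i, α' i = a * α i + b :=
  RS_eq_implies_affine_general hk hkn α α' hα hα' hRS
end

section
/- Let K be a subfield of F, let α ∈ K^n have pairwise distinct entries, and assume that η_j ∉ K for every j = 1,…,ℓ. Then the K-subfield subcode TRS_{k,n}[α,t,h,η] ∩ K^n has K-dimension exactly k − ℓ. -/
open Polynomial

set_option maxHeartbeats 1000000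
set_option synthInstance.maxHeartbeats 1000000

/-- coefficient of the "low part" polynomial -/
private lemma coeff_lowPart {R : Type*} [Semiring R] {k : ℕ} (u : Fin k → R) (m : ℕ) :
    (∑ i : Fin k, Polynomial.C (u i) * Polynomial.X ^ (i : ℕ)).coeff m
      = if hm : m < k then u ⟨m, hm⟩ else 0 := by
  rw [Polynomial.finset_sum_coeff]
  by_cases hm : m < k
  · rw [dif_pos hm, Finset.sum_eq_single (⟨m, hm⟩ : Fin k)]
    · rw [Polynomial.coeff_C_mul_X_pow, if_pos rfl]
    · intro b _ hb
      have hne : m ≠ (b : ℕ) := fun e => hb (Fin.ext e.symm)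
      rw [Polynomial.coeff_C_mul_X_pow, if_neg hne]
    · simp
  · rw [dif_neg hm]
    refine Finset.sum_eq_zero fun b _ => ?_
    have hne : m ≠ (b : ℕ) := by have := b.isLt; omega
    rw [Polynomial.coeff_C_mul_X_pow, if_neg hne]

/-- if α ∈ K^n has pairwise distinct entries and η_j ∉ K for all j,
then the K-subfield subcode TRS_{k,n}[α,t,h,η] ∩ K^n has K-dimension exactly k − ℓ. -/
theorem subfieldSubcode_TRS_finrank
    {F : Type*} [Field F] {n k ℓ : ℕ}
    (hk : 1 ≤ k) (hkn : k ≤ n) (hℓ : 1 ≤ ℓ)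
    (t : Fin ℓ → ℕ) (htinj : Function.Injective t)
    (htr : ∀ j, 1 ≤ t j ∧ t j ≤ n - k)
    (h : Fin ℓ → Fin k) (hhinj : Function.Injective h)
    (η : Fin ℓ → F) (hη : ∀ j, η j ≠ 0)
    (K : Subfield F)
    (α : Fin n → F) (hαK : ∀ i, α i ∈ K) (hα : Function.Injective α)
    (hηK : ∀ j, η j ∉ K) :
    Module.finrank K
        (Submodule.span K (TRS α k ℓ t h η ∩ { v | ∀ i, v i ∈ K }))
      = k - ℓ := by
  classical
  have hℓk : ℓ ≤ k := by
    have := Fintype.card_le_of_injective h hhinj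
    simpa using this
  set ι : K →+* F := K.subtype with hιdef
  set α' : Fin n → K := fun i => ⟨α i, hαK i⟩ with hα'def
  have hα'inj : Function.Injective α' := fun i j hij => hα (congrArg Subtype.val hij)
  -- the linear map
  let φ : (Fin k → K) →ₗ[K] (Fin n → F) :=
    { toFun := fun u idx => ∑ i : Fin k, (u i : F) * α idx ^ (i : ℕ)
      map_add' := by
        intro u v
        funext idx
        simp only [Pi.add_apply]
        push_cast
        rw [← Finset.sum_add_distrib]
        exact Finset.sum_congr rfl fun i _ => by ring
      map_smul' := by
        intro c u
        funext idx
        show (∑ i : Fin k, ((c * u i : K) : F) * α idx ^ (i : ℕ))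
          = (c : F) * ∑ i : Fin k, (u i : F) * α idx ^ (i : ℕ)
        rw [Finset.mul_sum]
        exact Finset.sum_congr rfl fun i _ => by push_cast; ring }
  have hφ_apply : ∀ (u : Fin k → K) (idx : Fin n),
      φ u idx = ∑ i : Fin k, (u i : F) * α idx ^ (i : ℕ) := fun _ _ => rfl
  -- φ is injective
  have hφinj : Function.Injective φ := by
    rw [injective_iff_map_eq_zero]
    intro u hu
    set p : F[X] := ∑ i : Fin k, Polynomial.C ((u i : F)) * Polynomial.X ^ (i : ℕ) with hp
    have hpeval : ∀ idx, p.eval (α idx) = 0 := by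
      intro idx
      have h0 : (∑ i : Fin k, (u i : F) * α idx ^ (i : ℕ)) = 0 := congrFun hu idx
      rw [hp, Polynomial.eval_finset_sum, ← h0]
      exact Finset.sum_congr rfl fun i _ => by simp
    have hpdeg : p.degree < (Finset.univ : Finset (Fin n)).card := by
      refine lt_of_le_of_lt (Polynomial.degree_sum_le _ _) ?_
      rw [Finset.card_univ, Fintype.card_fin]
      refine (Finset.sup_lt_iff (by exact_mod_cast WithBot.bot_lt_coe n)).2 fun i _ => ?_
      refine lt_of_le_of_lt (Polynomial.degree_C_mul_X_pow_le _ _) ?_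
      exact_mod_cast Nat.lt_of_lt_of_le i.isLt hkn
    have hp0 : p = 0 := by
      have h1 : p = Lagrange.interpolate Finset.univ α 0 :=
        Lagrange.eq_interpolate_of_eval_eq 0 hα.injOn hpdeg fun i _ => by
          simpa using hpeval i
      rw [h1, map_zero]
    funext i
    have := congrArg (fun q => Polynomial.coeff q (i : ℕ)) hp0
    simp only [hp] at this
    rw [coeff_lowPart] at this
    simp only [Polynomial.coeff_zero, dif_pos i.isLt, Fin.eta] at this
    exact Subtype.ext (by exact_mod_cast this)
  -- the submodule of constraint vectors
  set ψ : (Fin k → K) →ₗ[K] (Fin ℓ → K) := LinearMap.funLeft K K h with hψdef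
  set W : Submodule K (Fin k → K) := LinearMap.ker ψ with hWdef
  have hWmem : ∀ u : Fin k → K, u ∈ W ↔ ∀ j, u (h j) = 0 := by
    intro u
    constructor
    · intro hu j; exact congrFun hu j
    · intro hu; funext j; exact hu j
  -- evaluation of the twisted polynomial
  have heval : ∀ (u : Fin k → F) (idx : Fin n),
      (twistedPoly k ℓ t h η u).eval (α idx)
        = (∑ i : Fin k, u i * α idx ^ (i : ℕ))
          + ∑ j : Fin ℓ, (η j * u (h j)) * α idx ^ (k - 1 + t j) := by
    intro u idx
    simp [twistedPoly, Polynomial.eval_finset_sum]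
  -- key set equality
  have key : (TRS α k ℓ t h η ∩ { v | ∀ i, v i ∈ K })
      = ↑(Submodule.map φ W) := by
    ext v
    constructor
    · rintro ⟨⟨u, rfl⟩, hvK⟩
      set f : F[X] := twistedPoly k ℓ t h η u with hfdef
      -- degree bound
      have hfdeg : f.degree < (Finset.univ : Finset (Fin n)).card := by
        rw [Finset.card_univ, Fintype.card_fin]
        have hb : ∀ m : ℕ, m ≤ n - 1 →
            ∀ a : F, (Polynomial.C a * Polynomial.X ^ m).degree < (n : WithBot ℕ) := by
          intro m hm a
          refine lt_of_le_of_lt (Polynomial.degree_C_mul_X_pow_le _ _) ?_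
          exact_mod_cast Nat.lt_of_le_of_lt hm (by omega)
        have hlt : (0 : WithBot ℕ) ≤ n := by exact_mod_cast Nat.zero_le n
        refine lt_of_le_of_lt (Polynomial.degree_add_le _ _) (max_lt ?_ ?_)
        · refine lt_of_le_of_lt (Polynomial.degree_sum_le _ _) ?_
          refine (Finset.sup_lt_iff (by exact_mod_cast WithBot.bot_lt_coe n)).2 fun i _ => ?_
          exact hb i (by have := i.isLt; omega) _
        · refine lt_of_le_of_lt (Polynomial.degree_sum_le _ _) ?_
          refine (Finset.sup_lt_iff (by exact_mod_cast WithBot.bot_lt_coe n)).2 fun j _ => ?_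
          exact hb _ (by have := (htr j).2; omega) _
      -- all coefficients of f lie in K
      have hfK : ∀ m : ℕ, f.coeff m ∈ K := by
        set rK : Fin n → K := fun i => ⟨f.eval (α i), hvK i⟩ with hrK
        set g : K[X] := Lagrange.interpolate Finset.univ α' rK with hg
        have hgdeg : (g.map ι).degree < (Finset.univ : Finset (Fin n)).card := by
          refine lt_of_le_of_lt (Polynomial.degree_map_le) ?_
          have := Lagrange.degree_interpolate_lt (s := (Finset.univ : Finset (Fin n)))
            (v := α') rK hα'inj.injOn
          simpa only [Finset.card_univ, Fintype.card_fin] using this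
        have hgeval : ∀ i : Fin n, (g.map ι).eval (α i) = f.eval (α i) := by
          intro i
          have h1 : α i = ι (α' i) := rfl
          rw [Polynomial.eval_map, h1, Polynomial.eval₂_at_apply]
          rw [hg, Lagrange.eval_interpolate_at_node rK hα'inj.injOn (Finset.mem_univ i)]
          rfl
        have hfg : f = g.map ι := by
          have h1 : f = Lagrange.interpolate Finset.univ α (fun i => f.eval (α i)) :=
            Lagrange.eq_interpolate hα.injOn hfdeg
          have h2 : g.map ι = Lagrange.interpolate Finset.univ α (fun i => f.eval (α i)) :=
            Lagrange.eq_interpolate_of_eval_eq (fun i => f.eval (α i)) hα.injOn hgdeg fun i _ => hgeval i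
          rw [h1, h2]
        intro m
        rw [hfg, Polynomial.coeff_map]
        exact (g.coeff m).2
      -- coefficient identification
      have hcoeff_low : ∀ i : Fin k, f.coeff (i : ℕ) = u i := by
        intro i
        have h2 : (∑ j : Fin ℓ,
            Polynomial.C (η j * u (h j)) * Polynomial.X ^ (k - 1 + t j)).coeff (i : ℕ) = 0 := by
          rw [Polynomial.finset_sum_coeff]
          refine Finset.sum_eq_zero fun j _ => ?_
          have hne : (i : ℕ) ≠ k - 1 + t j := by
            have := i.isLt; have := (htr j).1; omega
          rw [Polynomial.coeff_C_mul_X_pow, if_neg hne]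
        rw [hfdef, twistedPoly, Polynomial.coeff_add, h2, add_zero, coeff_lowPart,
          dif_pos i.isLt, Fin.eta]
      have hcoeff_twist : ∀ j : Fin ℓ, f.coeff (k - 1 + t j) = η j * u (h j) := by
        intro j
        have h1 : (∑ i : Fin k,
            Polynomial.C (u i) * Polynomial.X ^ (i : ℕ)).coeff (k - 1 + t j) = 0 := by
          rw [coeff_lowPart, dif_neg]
          have := (htr j).1; omega
        have h2 : (∑ j' : Fin ℓ,
            Polynomial.C (η j' * u (h j')) * Polynomial.X ^ (k - 1 + t j')).coeff (k - 1 + t j)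
            = η j * u (h j) := by
          rw [Polynomial.finset_sum_coeff]
          rw [Finset.sum_eq_single j]
          · rw [Polynomial.coeff_C_mul_X_pow, if_pos rfl]
          · intro b _ hb
            have hne : (k - 1 + t j) ≠ k - 1 + t b := by
              intro e
              exact hb (htinj (by omega))
            rw [Polynomial.coeff_C_mul_X_pow, if_neg hne]
          · simp
        rw [hfdef, twistedPoly, Polynomial.coeff_add, h1, h2, zero_add]
      have huK : ∀ i : Fin k, u i ∈ K := fun i => hcoeff_low i ▸ hfK (i : ℕ)
      have hu0 : ∀ j : Fin ℓ, u (h j) = 0 := by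
        intro j
        by_contra hne
        refine hηK j ?_
        have h1 : η j * u (h j) ∈ K := hcoeff_twist j ▸ hfK _
        have h2 : (u (h j))⁻¹ ∈ K := K.inv_mem (huK (h j))
        have : η j = (η j * u (h j)) * (u (h j))⁻¹ := by
          field_simp
        rw [this]; exact K.mul_mem h1 h2
      refine ⟨fun i => ⟨u i, huK i⟩, (hWmem _).2 fun j => Subtype.ext (hu0 j), ?_⟩
      funext idx
      rw [hφ_apply]
      show (∑ i : Fin k, u i * α idx ^ (i : ℕ)) = evalVec α f idx
      rw [evalVec, heval]
      simp [hu0]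
    · rintro ⟨u, huW, rfl⟩
      have hu0 : ∀ j, u (h j) = 0 := (hWmem u).1 huW
      constructor
      · refine ⟨fun i => (u i : F), ?_⟩
        funext idx
        rw [evalVec, heval, hφ_apply]
        have : ∀ j : Fin ℓ, ((u (h j) : F)) = 0 := fun j => by rw [hu0 j]; rfl
        simp [this]
      · intro idx
        rw [hφ_apply]
        exact K.sum_mem fun i _ => K.mul_mem (u i).2 (K.pow_mem (hαK idx) _)
  rw [key, Submodule.span_coe_eq_restrictScalars, Submodule.restrictScalars_self]
  have e1 : Module.finrank K (Submodule.map φ W) = Module.finrank K W :=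
    (Submodule.equivMapOfInjective φ hφinj W).finrank_eq.symm
  rw [e1]
  have hψsurj : Function.Surjective ψ := LinearMap.funLeft_surjective_of_injective K K h hhinj
  have hrn := LinearMap.finrank_range_add_finrank_ker ψ
  rw [LinearMap.range_eq_top.2 hψsurj, finrank_top] at hrn
  rw [Module.finrank_pi, Module.finrank_pi, Fintype.card_fin, Fintype.card_fin,
    ← hWdef] at hrn
  omega
end

section
/- Let K be a subfield of F, let α ∈ K^n have pairwise distinct entries, and assume that η_j ∉ K for every j = 1,…,ℓ. Then the K-subfield subcode TRS_{k,n}[α,t,h,η] ∩ K^n is strictly contained in the K-linear Reed–Solomon code { ev_α(f) : f ∈ K[X], deg f ≤ k−1 } (viewing polynomials over K as polynomials over F), i.e., it is a proper K-subspace of that Reed–Solomon code. -/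
open Polynomial

/-- Two polynomials of degree `< n` agreeing at `n` distinct points are equal. -/
lemma eq_of_degree_lt_of_eval_eq {F : Type*} [Field F] {n : ℕ} {α : Fin n → F}
    (hα : Function.Injective α) {p q : F[X]}
    (hp : p.degree < (n : WithBot ℕ)) (hq : q.degree < (n : WithBot ℕ))
    (hev : ∀ i, p.eval (α i) = q.eval (α i)) : p = q := by
  by_cases hpq : p - q = 0
  · exact sub_eq_zero.mp hpq
  have hd : (p - q).degree < (n : WithBot ℕ) :=
    lt_of_le_of_lt (Polynomial.degree_sub_le p q) (max_lt hp hq)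
  have hnd : (p - q).natDegree < n := by
    rwa [Polynomial.natDegree_lt_iff_degree_lt hpq]
  have := Polynomial.eq_zero_of_natDegree_lt_card_of_eval_eq_zero (p - q) hα
    (fun i => by simp [hev i]) (by simpa using hnd)
  exact absurd this hpq
  
/-- A degree `< n` polynomial whose values at `n` distinct `K`-points lie in `K`
has all coefficients in `K`. -/
lemma coeffs_mem_of_eval_mem {F : Type*} [Field F] {n : ℕ} (K : Subfield F)
    (α : Fin n → F) (hαK : ∀ i, α i ∈ K) (hα : Function.Injective α)
    (p : F[X]) (hp : p.degree < (n : WithBot ℕ)) (hev : ∀ i, p.eval (α i) ∈ K) :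
    ∀ m, p.coeff m ∈ K := by
  classical
  set β : Fin n → K := fun i => ⟨α i, hαK i⟩ with hβ
  have hβinj : Function.Injective β := fun a b hab => hα (congrArg Subtype.val hab)
  set v : Fin n → K := fun i => ⟨p.eval (α i), hev i⟩ with hv
  set q : Polynomial K := Lagrange.interpolate Finset.univ β v with hq
  have hqdeg : q.degree < (n : WithBot ℕ) := by
    have := Lagrange.degree_interpolate_lt (s := Finset.univ) (v := β) (r := v)
      (hβinj.injOn)
    simpa only [Finset.card_univ, Fintype.card_fin] using this
  have hmapdeg : (q.map K.subtype).degree < (n : WithBot ℕ) := by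
    rwa [Polynomial.degree_map_eq_of_injective
      (show Function.Injective K.subtype from fun a b hab => Subtype.ext hab)]
  have heq : p = q.map K.subtype := by
    refine eq_of_degree_lt_of_eval_eq hα hp hmapdeg fun i => ?_
    have h1 : q.eval (β i) = v i :=
      Lagrange.eval_interpolate_at_node _ (hβinj.injOn) (Finset.mem_univ i)
    have : (q.map K.subtype).eval (α i) = K.subtype (q.eval (β i)) := by
      rw [Polynomial.eval_map]
      exact Polynomial.eval₂_at_apply K.subtype (β i)
    rw [this, h1]
    rfl
  intro m
  rw [heq, Polynomial.coeff_map]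
  exact (q.coeff m).2

section TwistedCoeffs

variable {F : Type*} [Field F] {k ℓ : ℕ} (t : Fin ℓ → ℕ) (h : Fin ℓ → Fin k)
  (η : Fin ℓ → F) (u : Fin k → F)

lemma twistedPoly_coeff_low (ht1 : ∀ j, 1 ≤ t j) (i : Fin k) :
    (twistedPoly k ℓ t h η u).coeff (i : ℕ) = u i := by
  classical
  rw [twistedPoly, Polynomial.coeff_add, Polynomial.finset_sum_coeff,
    Polynomial.finset_sum_coeff]
  have h1 : ∑ b : Fin k, (Polynomial.C (u b) * Polynomial.X ^ (b : ℕ)).coeff (i : ℕ) = u i := by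
    rw [Finset.sum_eq_single i]
    · simp
    · intro b _ hb
      rw [Polynomial.coeff_C_mul, Polynomial.coeff_X_pow, if_neg (by
        simp [Fin.val_eq_val, eq_comm]
        exact fun hx => hb (hx.symm)), mul_zero]
    · simp
  have h2 : ∑ j : Fin ℓ,
      (Polynomial.C (η j * u (h j)) * Polynomial.X ^ (k - 1 + t j)).coeff (i : ℕ) = 0 := by
    refine Finset.sum_eq_zero fun j _ => ?_
    rw [Polynomial.coeff_C_mul, Polynomial.coeff_X_pow, if_neg, mul_zero]
    have := i.isLt
    have := ht1 j
    omega
  rw [h1, h2, add_zero]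

lemma twistedPoly_coeff_high (hk : 1 ≤ k) (htinj : Function.Injective t)
    (ht1 : ∀ j, 1 ≤ t j) (j : Fin ℓ) :
    (twistedPoly k ℓ t h η u).coeff (k - 1 + t j) = η j * u (h j) := by
  classical
  rw [twistedPoly, Polynomial.coeff_add, Polynomial.finset_sum_coeff,
    Polynomial.finset_sum_coeff]
  have h1 : ∑ b : Fin k,
      (Polynomial.C (u b) * Polynomial.X ^ (b : ℕ)).coeff (k - 1 + t j) = 0 := by
    refine Finset.sum_eq_zero fun b _ => ?_
    rw [Polynomial.coeff_C_mul, Polynomial.coeff_X_pow, if_neg, mul_zero]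
    have := b.isLt
    have := ht1 j
    omega
  have h2 : ∑ j' : Fin ℓ,
      (Polynomial.C (η j' * u (h j')) * Polynomial.X ^ (k - 1 + t j')).coeff (k - 1 + t j)
        = η j * u (h j) := by
    rw [Finset.sum_eq_single j]
    · rw [Polynomial.coeff_C_mul, Polynomial.coeff_X_pow, if_pos rfl, mul_one]
    · intro b _ hb
      rw [Polynomial.coeff_C_mul, Polynomial.coeff_X_pow, if_neg (by
        intro hx
        exact hb (htinj (by omega))), mul_zero]
    · simp
  rw [h1, h2, zero_add]

lemma twistedPoly_degree_lt {n : ℕ} (hk : 1 ≤ k) (hkn : k ≤ n)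
    (htr : ∀ j, t j ≤ n - k) :
    (twistedPoly k ℓ t h η u).degree < (n : WithBot ℕ) := by
  have hlt : ((n - 1 : ℕ) : WithBot ℕ) < (n : WithBot ℕ) := by
    exact_mod_cast Nat.sub_lt (by omega) one_pos
  refine lt_of_le_of_lt ?_ hlt
  rw [twistedPoly]
  refine le_trans (Polynomial.degree_add_le _ _) (max_le ?_ ?_)
  · refine le_trans (Polynomial.degree_sum_le _ _) ?_
    rw [Finset.sup_le_iff]
    intro i _
    refine le_trans (Polynomial.degree_C_mul_X_pow_le _ _) ?_
    have hi : (i : ℕ) ≤ n - 1 := by have := i.isLt; omega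
    exact_mod_cast hi
  · refine le_trans (Polynomial.degree_sum_le _ _) ?_
    rw [Finset.sup_le_iff]
    intro j _
    refine le_trans (Polynomial.degree_C_mul_X_pow_le _ _) ?_
    have hj : k - 1 + t j ≤ n - 1 := by have := htr j; omega
    exact_mod_cast hj

end TwistedCoeffs

/-- if α ∈ K^n has pairwise distinct entries and η_j ∉ K for all j,
then the K-subfield subcode TRS_{k,n}[α,t,h,η] ∩ K^n is strictly contained in the
K-linear Reed–Solomon code { ev_α(f) : f ∈ K[X], deg f ≤ k−1 }. -/
theorem subfieldSubcode_TRS_ssubset_RS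
    {F : Type*} [Field F] {n k ℓ : ℕ}
    (hk : 1 ≤ k) (hkn : k ≤ n) (hℓ : 1 ≤ ℓ)
    (t : Fin ℓ → ℕ) (htinj : Function.Injective t)
    (htr : ∀ j, 1 ≤ t j ∧ t j ≤ n - k)
    (h : Fin ℓ → Fin k) (hhinj : Function.Injective h)
    (η : Fin ℓ → F) (hη : ∀ j, η j ≠ 0)
    (K : Subfield F)
    (α : Fin n → F) (hαK : ∀ i, α i ∈ K) (hα : Function.Injective α)
    (hηK : ∀ j, η j ∉ K) :
    TRS α k ℓ t h η ∩ { v | ∀ i, v i ∈ K }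
      ⊂ { c : Fin n → F | ∃ f : F[X], (∀ m, f.coeff m ∈ K) ∧
            f.degree ≤ ((k - 1 : ℕ) : WithBot ℕ) ∧ c = evalVec α f } := by
  classical
  -- Main structural fact: if the twisted codeword has values in K, the twist coeffs vanish
  have key : ∀ u : Fin k → F, (∀ i, (twistedPoly k ℓ t h η u).eval (α i) ∈ K) →
      (∀ j, u (h j) = 0) ∧ (∀ i : Fin k, u i ∈ K) := by
    intro u hev
    have hdeg := twistedPoly_degree_lt t h η u hk hkn (fun j => (htr j).2)
    have hcoef := coeffs_mem_of_eval_mem K α hαK hα _ hdeg hev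
    have hlow : ∀ i : Fin k, u i ∈ K := fun i => by
      have := hcoef (i : ℕ)
      rwa [twistedPoly_coeff_low t h η u (fun j => (htr j).1) i] at this
    refine ⟨fun j => ?_, hlow⟩
    have hhigh := hcoef (k - 1 + t j)
    rw [twistedPoly_coeff_high t h η u hk htinj (fun j => (htr j).1) j] at hhigh
    by_contra huj
    have : η j ∈ K := by
      have : η j = (η j * u (h j)) * (u (h j))⁻¹ := by
        field_simp
      rw [this]
      exact K.mul_mem hhigh (K.inv_mem (hlow (h j)))
    exact hηK j this
  rw [Set.ssubset_def]
  constructor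
  · rintro c ⟨⟨u, rfl⟩, hcK⟩
    have hev : ∀ i, (twistedPoly k ℓ t h η u).eval (α i) ∈ K := hcK
    obtain ⟨hzero, hlow⟩ := key u hev
    refine ⟨∑ i : Fin k, Polynomial.C (u i) * Polynomial.X ^ (i : ℕ), ?_, ?_, ?_⟩
    · intro m
      rw [Polynomial.finset_sum_coeff]
      refine K.sum_mem fun i _ => ?_
      rw [Polynomial.coeff_C_mul, Polynomial.coeff_X_pow]
      split
      · simpa using hlow i
      · simpa using K.zero_mem
    · refine le_trans (Polynomial.degree_sum_le _ _) ?_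
      rw [Finset.sup_le_iff]
      intro i _
      refine le_trans (Polynomial.degree_C_mul_X_pow_le _ _) ?_
      have hi : (i : ℕ) ≤ k - 1 := by have := i.isLt; omega
      exact_mod_cast hi
    · have : twistedPoly k ℓ t h η u = ∑ i : Fin k, Polynomial.C (u i) * Polynomial.X ^ (i : ℕ) := by
        rw [twistedPoly]
        have : ∑ j : Fin ℓ, Polynomial.C (η j * u (h j)) * Polynomial.X ^ (k - 1 + t j) = 0 := by
          refine Finset.sum_eq_zero fun j _ => ?_
          rw [hzero j, mul_zero, map_zero, zero_mul]
        rw [this, add_zero]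
      rw [← this]
  · -- strictness: ev_α(X^{h j₀}) is in RS_K but not in the subfield subcode
    intro hsub
    set j₀ : Fin ℓ := ⟨0, hℓ⟩
    set g : F[X] := Polynomial.X ^ ((h j₀ : Fin k) : ℕ) with hg
    have hgmem : evalVec α g ∈ { c : Fin n → F | ∃ f : F[X], (∀ m, f.coeff m ∈ K) ∧
        f.degree ≤ ((k - 1 : ℕ) : WithBot ℕ) ∧ c = evalVec α f } := by
      refine ⟨g, ?_, ?_, rfl⟩
      · intro m
        rw [hg, Polynomial.coeff_X_pow]
        split
        · simpa using K.one_mem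
        · simpa using K.zero_mem
      · rw [hg, Polynomial.degree_X_pow]
        have hi : ((h j₀ : Fin k) : ℕ) ≤ k - 1 := by have := (h j₀).isLt; omega
        exact_mod_cast hi
    obtain ⟨⟨u, hu⟩, -⟩ := hsub hgmem
    have hev : ∀ i, (twistedPoly k ℓ t h η u).eval (α i) ∈ K := by
      intro i
      have : (twistedPoly k ℓ t h η u).eval (α i) = g.eval (α i) := by
        have := congrFun hu i
        simp [evalVec] at this
        rw [← this]
      rw [this, hg]
      simp only [Polynomial.eval_pow, Polynomial.eval_X]
      exact K.pow_mem (hαK i) _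
    obtain ⟨hzero, -⟩ := key u hev
    -- compare coefficient at h j₀
    have hdegt := twistedPoly_degree_lt t h η u hk hkn (fun j => (htr j).2)
    have hdegg : g.degree < (n : WithBot ℕ) := by
      rw [hg, Polynomial.degree_X_pow]
      have hi : ((h j₀ : Fin k) : ℕ) < n := by have := (h j₀).isLt; omega
      exact_mod_cast hi
    have heq : twistedPoly k ℓ t h η u = g := by
      refine eq_of_degree_lt_of_eval_eq hα hdegt hdegg fun i => ?_
      have := congrFun hu i
      simp [evalVec] at this
      rw [← this]
    have hc1 : (twistedPoly k ℓ t h η u).coeff ((h j₀ : Fin k) : ℕ) = u (h j₀) :=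
      twistedPoly_coeff_low t h η u (fun j => (htr j).1) (h j₀)
    have hc2 : g.coeff ((h j₀ : Fin k) : ℕ) = 1 := by
      rw [hg, Polynomial.coeff_X_pow, if_pos rfl]
    rw [heq, hc2, hzero j₀] at hc1
    exact one_ne_zero hc1
end
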